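/- Let k, ℓ ≥ 0 be integers and n = k + ℓ + 2. Define J_n(x) = (h_{n,2}(x))^4 / C(n+1,2)^4 − h_{n,3}(x)(h_{n,1}(x))^5 / (C(n+2,3) n^5), and for t ≥ 0 let x(t) ∈ [0,∞)^n be the point with k+1 coordinates equal to t and ℓ+1 coordinates equal to 1. Then J_n(x(t)) = ((k+1)(ℓ+1)(t−1)^2 / ((n+2)(n+1)^4 n^6)) · Σ_{i=0}^{6} c_i t^i, where each c_i is a polynomial in k and ℓ with nonnegative integer coefficients; in particular c_6 = (k+2)(k+1)^3 (k^4 + 2k^3ℓ + k^2ℓ^2 + 12k^3 + 17k^2ℓ + 5kℓ^2 + 49k^2 + 43kℓ + 5ℓ^2 + 82k + 32ℓ + 47), and consequently J_n(x(t)) ≥ 0 for all t ≥ 0. -/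
import Mathlib


/-- The complete homogeneous symmetric polynomial `h_{n,k}`, as a function on `ℝ^n`:
the sum of all monomials of total degree `k` in `x 0, …, x (n-1)` (with `h_{n,0} = 1`). -/
noncomputable def hsym (n k : ℕ) (x : Fin n → ℝ) : ℝ :=
  ∑ d ∈ Finset.Nat.antidiagonalTuple n k, ∏ i, x i ^ d i

/-- `J_n = H_{n,(2^4)} − H_{n,(3,1^5)}` as a function on `ℝ^n`. -/
noncomputable def Jfun (n : ℕ) (x : Fin n → ℝ) : ℝ :=
  (hsym n 2 x) ^ 4 / (((n + 1).choose 2 : ℝ)) ^ 4 -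
    hsym n 3 x * (hsym n 1 x) ^ 5 / (((n + 2).choose 3 : ℝ) * (n : ℝ) ^ 5)


def cpoly0 (k l : ℕ) : ℕ := 1 * k^2 * l^6 + 10 * k^2 * l^5 + 39 * k^2 * l^4 + 77 * k^2 * l^3 + 82 * k^2 * l^2 + 45 * k^2 * l + 10 * k^2 + 2 * k * l^7 + 27 * k * l^6 + 146 * k * l^5 + 414 * k * l^4 + 670 * k * l^3 + 623 * k * l^2 + 310 * k * l + 64 * k + 1 * l^8 + 17 * l^7 + 118 * l^6 + 442 * l^5 + 984 * l^4 + 1340 * l^3 + 1095 * l^2 + 493 * l + 94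

def cpoly1 (k l : ℕ) : ℕ := 6 * k^3 * l^5 + 44 * k^3 * l^4 + 124 * k^3 * l^3 + 168 * k^3 * l^2 + 110 * k^3 * l + 28 * k^3 + 12 * k^2 * l^6 + 134 * k^2 * l^5 + 582 * k^2 * l^4 + 1270 * k^2 * l^3 + 1478 * k^2 * l^2 + 876 * k^2 * l + 208 * k^2 + 6 * k * l^7 + 94 * k * l^6 + 586 * k * l^5 + 1896 * k * l^4 + 3458 * k * l^3 + 3574 * k * l^2 + 1950 * k * l + 436 * k + 4 * l^7 + 62 * l^6 + 374 * l^5 + 1166 * l^4 + 2054 * l^3 + 2060 * l^2 + 1096 * l + 240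

def cpoly2 (k l : ℕ) : ℕ := 15 * k^4 * l^4 + 76 * k^4 * l^3 + 142 * k^4 * l^2 + 116 * k^4 * l + 35 * k^4 + 30 * k^3 * l^5 + 283 * k^3 * l^4 + 948 * k^3 * l^3 + 1474 * k^3 * l^2 + 1086 * k^3 * l + 307 * k^3 + 15 * k^2 * l^6 + 233 * k^2 * l^5 + 1306 * k^2 * l^4 + 3473 * k^2 * l^3 + 4756 * k^2 * l^2 + 3242 * k^2 * l + 871 * k^2 + 26 * k * l^6 + 346 * k * l^5 + 1733 * k * l^4 + 4268 * k * l^3 + 5544 * k * l^2 + 3642 * k * l + 953 * k + 11 * l^6 + 143 * l^5 + 695 * l^4 + 1667 * l^3 + 2120 * l^2 + 1370 * l + 354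

def cpoly3 (k l : ℕ) : ℕ := 20 * k^5 * l^3 + 64 * k^5 * l^2 + 68 * k^5 * l + 24 * k^5 + 40 * k^4 * l^4 + 332 * k^4 * l^3 + 796 * k^4 * l^2 + 756 * k^4 * l + 252 * k^4 + 20 * k^3 * l^5 + 332 * k^3 * l^4 + 1676 * k^3 * l^3 + 3368 * k^3 * l^2 + 2936 * k^3 * l + 932 * k^3 + 64 * k^2 * l^5 + 796 * k^2 * l^4 + 3368 * k^2 * l^3 + 6160 * k^2 * l^2 + 5080 * k^2 * l + 1556 * k^2 + 68 * k * l^5 + 756 * k * l^4 + 2936 * k * l^3 + 5080 * k * l^2 + 4036 * k * l + 1204 * k + 24 * l^5 + 252 * l^4 + 932 * l^3 + 1556 * l^2 + 1204 * l + 352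

def cpoly4 (k l : ℕ) : ℕ := 15 * k^6 * l^2 + 26 * k^6 * l + 11 * k^6 + 30 * k^5 * l^3 + 233 * k^5 * l^2 + 346 * k^5 * l + 143 * k^5 + 15 * k^4 * l^4 + 283 * k^4 * l^3 + 1306 * k^4 * l^2 + 1733 * k^4 * l + 695 * k^4 + 76 * k^3 * l^4 + 948 * k^3 * l^3 + 3473 * k^3 * l^2 + 4268 * k^3 * l + 1667 * k^3 + 142 * k^2 * l^4 + 1474 * k^2 * l^3 + 4756 * k^2 * l^2 + 5544 * k^2 * l + 2120 * k^2 + 116 * k * l^4 + 1086 * k * l^3 + 3242 * k * l^2 + 3642 * k * l + 1370 * k + 35 * l^4 + 307 * l^3 + 871 * l^2 + 953 * l + 354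

def cpoly5 (k l : ℕ) : ℕ := 6 * k^7 * l + 4 * k^7 + 12 * k^6 * l^2 + 94 * k^6 * l + 62 * k^6 + 6 * k^5 * l^3 + 134 * k^5 * l^2 + 586 * k^5 * l + 374 * k^5 + 44 * k^4 * l^3 + 582 * k^4 * l^2 + 1896 * k^4 * l + 1166 * k^4 + 124 * k^3 * l^3 + 1270 * k^3 * l^2 + 3458 * k^3 * l + 2054 * k^3 + 168 * k^2 * l^3 + 1478 * k^2 * l^2 + 3574 * k^2 * l + 2060 * k^2 + 110 * k * l^3 + 876 * k * l^2 + 1950 * k * l + 1096 * k + 28 * l^3 + 208 * l^2 + 436 * l + 240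

def cpoly6 (k l : ℕ) : ℕ := 1 * k^8 + 2 * k^7 * l + 17 * k^7 + 1 * k^6 * l^2 + 27 * k^6 * l + 118 * k^6 + 10 * k^5 * l^2 + 146 * k^5 * l + 442 * k^5 + 39 * k^4 * l^2 + 414 * k^4 * l + 984 * k^4 + 77 * k^3 * l^2 + 670 * k^3 * l + 1340 * k^3 + 82 * k^2 * l^2 + 623 * k^2 * l + 1095 * k^2 + 45 * k * l^2 + 310 * k * l + 493 * k + 10 * l^2 + 64 * l + 94

def cvec (k l : ℕ) : Fin 7 → ℕ := ![cpoly0 k l, cpoly1 k l, cpoly2 k l, cpoly3 k l, cpoly4 k l, cpoly5 k l, cpoly6 k l]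

lemma cvec_six (k l : ℕ) : cvec k l 6 = (k + 2) * (k + 1) ^ 3 *
    (k ^ 4 + 2 * k ^ 3 * l + k ^ 2 * l ^ 2 + 12 * k ^ 3 + 17 * k ^ 2 * l +
      5 * k * l ^ 2 + 49 * k ^ 2 + 43 * k * l + 5 * l ^ 2 + 82 * k + 32 * l + 47) := by
  show cpoly6 k l = _
  unfold cpoly6
  ring


lemma hsym_zero (n : ℕ) (x : Fin n → ℝ) : hsym n 0 x = 1 := by
  simp [hsym, Finset.Nat.antidiagonalTuple_zero_right]

lemma hsym_nil (m : ℕ) (x : Fin 0 → ℝ) : hsym 0 (m+1) x = 0 := by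
  simp [hsym, Finset.Nat.antidiagonalTuple_zero_succ]

lemma hsym_succ (n m : ℕ) (x : Fin (n+1) → ℝ) :
    hsym (n+1) m x =
      ∑ j ∈ Finset.range (m+1), x 0 ^ j * hsym n (m-j) (fun i => x i.succ) := by
  unfold hsym
  simp_rw [Finset.mul_sum]
  rw [Finset.sum_sigma']
  refine Finset.sum_nbij' (fun d => ⟨d 0, Fin.tail d⟩) (fun p => Fin.cons p.1 p.2)
    ?_ ?_ ?_ ?_ ?_
  · intro d hd
    rw [Finset.Nat.mem_antidiagonalTuple, Fin.sum_univ_succ] at hd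
    simp only [Finset.mem_sigma, Finset.mem_range, Finset.Nat.mem_antidiagonalTuple, Fin.tail]
    omega
  · intro p hp
    simp only [Finset.mem_sigma, Finset.mem_range, Finset.Nat.mem_antidiagonalTuple] at hp
    simp only [Finset.Nat.mem_antidiagonalTuple, Fin.sum_univ_succ, Fin.cons_zero, Fin.cons_succ]
    omega
  · intro d _
    exact Fin.cons_self_tail d
  · intro p _
    simp [Fin.tail]
  · intro d _
    rw [Fin.prod_univ_succ]
    rfl

lemma hsym_cast {n n' : ℕ} (h : n = n') (m : ℕ) (x : Fin n' → ℝ) :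
    hsym n' m x = hsym n m (fun i => x (Fin.cast h i)) := by
  subst h; rfl

lemma ones1 (b : ℕ) : hsym b 1 (fun _ => (1:ℝ)) = b := by
  induction b with
  | zero => rw [show (1:ℕ) = 0+1 from rfl, hsym_nil]; simp
  | succ b ih =>
    rw [hsym_succ]
    simp [Finset.sum_range_succ, ih, hsym_zero]

lemma ones2 (b : ℕ) : hsym b 2 (fun _ => (1:ℝ)) = b*(b+1)/2 := by
  induction b with
  | zero => rw [show (2:ℕ) = 1+1 from rfl, hsym_nil]; simp
  | succ b ih =>
    rw [hsym_succ]
    simp only [Finset.sum_range_succ, Finset.sum_range_zero, one_pow, one_mul]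
    rw [show (2:ℕ)-0 = 2 from rfl, show (2:ℕ)-1 = 1 from rfl, show (2:ℕ)-2 = 0 from rfl]
    rw [hsym_zero]
    show (0:ℝ) + hsym b 2 (fun _ => 1) + hsym b 1 (fun _ => 1) + 1 = _
    rw [ih, ones1]
    push_cast
    ring

lemma ones3 (b : ℕ) : hsym b 3 (fun _ => (1:ℝ)) = b*(b+1)*(b+2)/6 := by
  induction b with
  | zero => rw [show (3:ℕ) = 2+1 from rfl, hsym_nil]; simp
  | succ b ih =>
    rw [hsym_succ]
    simp only [Finset.sum_range_succ, Finset.sum_range_zero, one_pow, one_mul]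
    rw [show (3:ℕ)-0 = 3 from rfl, show (3:ℕ)-1 = 2 from rfl, show (3:ℕ)-2 = 1 from rfl,
      show (3:ℕ)-3 = 0 from rfl]
    rw [hsym_zero]
    show (0:ℝ) + hsym b 3 (fun _ => 1) + hsym b 2 (fun _ => 1) + hsym b 1 (fun _ => 1) + 1 = _
    rw [ih, ones2, ones1]
    push_cast
    ring

lemma blockfun_zero (b : ℕ) (t : ℝ) :
    (fun i : Fin b => (fun j : Fin (0+b) => if (j:ℕ) < 0 then t else 1) (Fin.cast (Nat.zero_add b).symm i))
      = fun _ : Fin b => (1:ℝ) := by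
  funext i; simp

lemma blockfun_succ (a b : ℕ) (t : ℝ) (h : (a+b)+1 = a+1+b) :
    (fun i : Fin (a+b) =>
      (fun j : Fin (a+1+b) => if (j:ℕ) < a+1 then t else 1) (Fin.cast h i.succ))
      = fun i : Fin (a+b) => if (i:ℕ) < a then t else 1 := by
  funext i
  simp [Fin.coe_cast, Nat.succ_lt_succ_iff]

lemma block1 (a b : ℕ) (t : ℝ) :
    hsym (a+b) 1 (fun i => if (i:ℕ) < a then t else 1) = (a:ℝ)*t + b := by
  induction a with
  | zero =>
    rw [hsym_cast (Nat.zero_add b).symm, blockfun_zero, ones1]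
    push_cast; ring
  | succ a ih =>
    have h : (a+b)+1 = a+1+b := by omega
    rw [hsym_cast h, hsym_succ]
    simp only [Finset.sum_range_succ, Finset.sum_range_zero]
    rw [blockfun_succ a b t h]
    have h0 : (if ((Fin.cast h (0 : Fin ((a+b)+1)) : Fin (a+1+b)) : ℕ) < a+1 then t else (1:ℝ)) = t := by
      simp
    rw [h0]
    rw [show (1:ℕ)-0 = 1 from rfl, show (1:ℕ)-1 = 0 from rfl, hsym_zero, ih]
    push_cast; ring

lemma block2 (a b : ℕ) (t : ℝ) :
    hsym (a+b) 2 (fun i => if (i:ℕ) < a then t else 1)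
      = (a:ℝ)*(a+1)/2*t^2 + a*b*t + b*(b+1)/2 := by
  induction a with
  | zero =>
    rw [hsym_cast (Nat.zero_add b).symm, blockfun_zero, ones2]
    push_cast; ring
  | succ a ih =>
    have h : (a+b)+1 = a+1+b := by omega
    rw [hsym_cast h, hsym_succ]
    simp only [Finset.sum_range_succ, Finset.sum_range_zero]
    rw [blockfun_succ a b t h]
    have h0 : (if ((Fin.cast h (0 : Fin ((a+b)+1)) : Fin (a+1+b)) : ℕ) < a+1 then t else (1:ℝ)) = t := by
      simp
    rw [h0]
    rw [show (2:ℕ)-0 = 2 from rfl, show (2:ℕ)-1 = 1 from rfl, show (2:ℕ)-2 = 0 from rfl,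
      hsym_zero, ih, block1]
    push_cast; ring

lemma block3 (a b : ℕ) (t : ℝ) :
    hsym (a+b) 3 (fun i => if (i:ℕ) < a then t else 1)
      = (a:ℝ)*(a+1)*(a+2)/6*t^3 + a*(a+1)/2*b*t^2 + a*(b*(b+1)/2)*t + b*(b+1)*(b+2)/6 := by
  induction a with
  | zero =>
    rw [hsym_cast (Nat.zero_add b).symm, blockfun_zero, ones3]
    push_cast; ring
  | succ a ih =>
    have h : (a+b)+1 = a+1+b := by omega
    rw [hsym_cast h, hsym_succ]
    simp only [Finset.sum_range_succ, Finset.sum_range_zero]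
    rw [blockfun_succ a b t h]
    have h0 : (if ((Fin.cast h (0 : Fin ((a+b)+1)) : Fin (a+1+b)) : ℕ) < a+1 then t else (1:ℝ)) = t := by
      simp
    rw [h0]
    rw [show (3:ℕ)-0 = 3 from rfl, show (3:ℕ)-1 = 2 from rfl, show (3:ℕ)-2 = 1 from rfl,
      show (3:ℕ)-3 = 0 from rfl, hsym_zero, ih, block2, block1]
    push_cast; ring

lemma choose2_nat (m : ℕ) : 2 * (m+1).choose 2 = (m+1)*m := by
  induction m with
  | zero => rfl
  | succ m ih =>
    rw [show m+1+1 = (m+1)+1 from rfl, Nat.choose_succ_succ (m+1) 1, Nat.choose_one_right]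
    rw [Nat.mul_add, ih]
    ring

lemma choose3_nat (m : ℕ) : 6 * (m+2).choose 3 = (m+2)*(m+1)*m := by
  induction m with
  | zero => rfl
  | succ m ih =>
    rw [show m+1+2 = (m+2)+1 from rfl, Nat.choose_succ_succ (m+2) 2]
    rw [Nat.mul_add, ih, show (6:ℕ) = 3*2 from rfl, Nat.mul_assoc, choose2_nat]
    ring

lemma choose2_real (m : ℕ) : (((m+1).choose 2 : ℕ) : ℝ) = (m+1)*m/2 := by
  have := congrArg (fun x : ℕ => (x:ℝ)) (choose2_nat m)
  push_cast at this
  linarith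

lemma choose3_real (m : ℕ) : (((m+2).choose 3 : ℕ) : ℝ) = (m+2)*(m+1)*m/6 := by
  have := congrArg (fun x : ℕ => (x:ℝ)) (choose3_nat m)
  push_cast at this
  linarith


lemma divform (nv h1v h2v h3v X : ℝ) (hn : nv ≠ 0) (hn1 : nv+1 ≠ 0) (hn2 : nv+2 ≠ 0)
    (hkey : 16*(nv+2)*nv^2*h2v^4 - 6*(nv+1)^3*(h3v*h1v^5) = X) :
    h2v^4/((nv+1)*nv/2)^4 - h3v*h1v^5/((nv+2)*(nv+1)*nv/6*(nv^5)) = X/((nv+2)*(nv+1)^4*nv^6) := by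
  rw [← hkey]
  field_simp
  ring


set_option maxHeartbeats 4000000

/-- For `k, ℓ ≥ 0` and `n = k + ℓ + 2`, evaluating `J_n` at the point with `k+1`
coordinates equal to `t` and `ℓ+1` coordinates equal to `1` gives
`J_n(x(t)) = ((k+1)(ℓ+1)(t−1)^2/((n+2)(n+1)^4 n^6)) · Σ_{i=0}^{6} c_i t^i` for
nonnegative integers `c_0,…,c_6` (polynomial expressions in `k, ℓ` with nonnegative
coefficients), with `c_6` as stated; consequently `J_n(x(t)) ≥ 0` for all `t ≥ 0`. -/
theorem Jfun_two_block_factorization (k l : ℕ) :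
    ∃ c : Fin 7 → ℕ,
      c 6 = (k + 2) * (k + 1) ^ 3 *
          (k ^ 4 + 2 * k ^ 3 * l + k ^ 2 * l ^ 2 + 12 * k ^ 3 + 17 * k ^ 2 * l +
            5 * k * l ^ 2 + 49 * k ^ 2 + 43 * k * l + 5 * l ^ 2 + 82 * k + 32 * l + 47) ∧
      (∀ t : ℝ, 0 ≤ t →
          Jfun (k + l + 2) (fun i => if (i : ℕ) < k + 1 then t else 1) =
            ((k : ℝ) + 1) * ((l : ℝ) + 1) * (t - 1) ^ 2 /
                  ((((k + l + 2 : ℕ) : ℝ) + 2) * (((k + l + 2 : ℕ) : ℝ) + 1) ^ 4 *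
                    ((k + l + 2 : ℕ) : ℝ) ^ 6) *
                ∑ i : Fin 7, (c i : ℝ) * t ^ (i : ℕ)) ∧
      ∀ t : ℝ, 0 ≤ t →
        0 ≤ Jfun (k + l + 2) (fun i => if (i : ℕ) < k + 1 then t else 1) := by
  set c : Fin 7 → ℕ := cvec k l with hc
  have h6 : c 6 = (k + 2) * (k + 1) ^ 3 *
      (k ^ 4 + 2 * k ^ 3 * l + k ^ 2 * l ^ 2 + 12 * k ^ 3 + 17 * k ^ 2 * l +
        5 * k * l ^ 2 + 49 * k ^ 2 + 43 * k * l + 5 * l ^ 2 + 82 * k + 32 * l + 47) := cvec_six k l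
  have heq : ∀ t : ℝ, 0 ≤ t →
      Jfun (k + l + 2) (fun i => if (i : ℕ) < k + 1 then t else 1) =
        ((k : ℝ) + 1) * ((l : ℝ) + 1) * (t - 1) ^ 2 /
              ((((k + l + 2 : ℕ) : ℝ) + 2) * (((k + l + 2 : ℕ) : ℝ) + 1) ^ 4 *
                ((k + l + 2 : ℕ) : ℝ) ^ 6) *
            ∑ i : Fin 7, (c i : ℝ) * t ^ (i : ℕ) := by
    intro t ht
    have hk : (k+1)+(l+1) = k+l+2 := by omega
    have hf : (fun i : Fin ((k+1)+(l+1)) =>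
        (fun j : Fin (k+l+2) => if (j:ℕ) < k+1 then t else 1) (Fin.cast hk i))
        = fun i : Fin ((k+1)+(l+1)) => if (i:ℕ) < k+1 then t else 1 := by
      funext i; simp
    have e1 : hsym (k+l+2) 1 (fun i => if (i:ℕ) < k+1 then t else 1)
        = ((k:ℝ)+1)*t + ((l:ℝ)+1) := by
      rw [hsym_cast hk, hf, block1]; push_cast; ring
    have e2 : hsym (k+l+2) 2 (fun i => if (i:ℕ) < k+1 then t else 1)
        = ((k:ℝ)+1)*((k:ℝ)+2)/2*t^2 + ((k:ℝ)+1)*((l:ℝ)+1)*t + ((l:ℝ)+1)*((l:ℝ)+2)/2 := by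
      rw [hsym_cast hk, hf, block2]; push_cast; ring
    have e3 : hsym (k+l+2) 3 (fun i => if (i:ℕ) < k+1 then t else 1)
        = ((k:ℝ)+1)*((k:ℝ)+2)*((k:ℝ)+3)/6*t^3 + ((k:ℝ)+1)*((k:ℝ)+2)/2*((l:ℝ)+1)*t^2
          + ((k:ℝ)+1)*(((l:ℝ)+1)*((l:ℝ)+2)/2)*t + ((l:ℝ)+1)*((l:ℝ)+2)*((l:ℝ)+3)/6 := by
      rw [hsym_cast hk, hf, block3]; push_cast; ring
    have hn : ((k+l+2:ℕ):ℝ) ≠ 0 := by positivity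
    have hn1 : ((k+l+2:ℕ):ℝ)+1 ≠ 0 := by positivity
    have hn2 : ((k+l+2:ℕ):ℝ)+2 ≠ 0 := by positivity
    have v0 : c 0 = cpoly0 k l := rfl
    have v1 : c 1 = cpoly1 k l := rfl
    have v2 : c 2 = cpoly2 k l := rfl
    have v3 : c 3 = cpoly3 k l := rfl
    have v4 : c 4 = cpoly4 k l := rfl
    have v5 : c 5 = cpoly5 k l := rfl
    have v6 : c 6 = cpoly6 k l := rfl
    have hkey : 16*(((k+l+2:ℕ):ℝ)+2)*((k+l+2:ℕ):ℝ)^2*(hsym (k+l+2) 2 (fun i => if (i:ℕ) < k+1 then t else 1))^4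
        - 6*(((k+l+2:ℕ):ℝ)+1)^3*((hsym (k+l+2) 3 (fun i => if (i:ℕ) < k+1 then t else 1))
            * (hsym (k+l+2) 1 (fun i => if (i:ℕ) < k+1 then t else 1))^5)
        = ((k:ℝ)+1)*((l:ℝ)+1)*(t-1)^2 * ∑ i : Fin 7, (c i : ℝ) * t ^ (i : ℕ) := by
      rw [e1, e2, e3, Fin.sum_univ_seven, v0, v1, v2, v3, v4, v5, v6]
      have w0 : (((0:Fin 7)):ℕ) = 0 := rfl
      have w1 : (((1:Fin 7)):ℕ) = 1 := rfl
      have w2 : (((2:Fin 7)):ℕ) = 2 := rfl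
      have w3 : (((3:Fin 7)):ℕ) = 3 := rfl
      have w4 : (((4:Fin 7)):ℕ) = 4 := rfl
      have w5 : (((5:Fin 7)):ℕ) = 5 := rfl
      have w6 : (((6:Fin 7)):ℕ) = 6 := rfl
      rw [w0, w1, w2, w3, w4, w5, w6]
      simp only [cpoly0, cpoly1, cpoly2, cpoly3, cpoly4, cpoly5, cpoly6]
      push_cast
      ring
    unfold Jfun
    rw [choose2_real (k+l+2), choose3_real (k+l+2)]
    rw [divform _ _ _ _ _ hn hn1 hn2 hkey]
    rw [div_mul_eq_mul_div]
  refine ⟨c, h6, heq, fun t ht => ?_⟩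
  rw [heq t ht]
  have hn : (0:ℝ) < ((k + l + 2 : ℕ) : ℝ) := by
    exact_mod_cast Nat.succ_pos (k+l+1)
  have hden : 0 < (((k + l + 2 : ℕ) : ℝ) + 2) * (((k + l + 2 : ℕ) : ℝ) + 1) ^ 4 *
      ((k + l + 2 : ℕ) : ℝ) ^ 6 := by
    apply mul_pos (mul_pos (by linarith) (by positivity)) (pow_pos hn 6)
  have hsum : 0 ≤ ∑ i : Fin 7, (c i : ℝ) * t ^ (i : ℕ) :=
    Finset.sum_nonneg fun i _ => by positivity
  exact mul_nonneg (div_nonneg (by positivity) hden.le) hsum
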